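/- Let M and L belong to the class LC and let λ denote the quotient sequence of L. Then the following are equivalent: (i) there exist a ∈ ℕ_{>0} and B ≥ 1 such that L_{2p} ≤ B^p·L_p·(M_{ap})^{1/a} for all p ∈ ℕ; (ii) there exist a ∈ ℕ_{>0}, A ≥ 1 and C ≥ 0 such that ω_{L·M̃^a}(t²) ≤ ω_L(At) + C for all t ≥ 0, where L·M̃^a denotes the pointwise product sequence; (iii) there exist a ∈ ℕ_{>0} and A ≥ 1 such that λ_p ≤ A·(M_{ap})^{1/(ap)} for all p ≥ 1. Moreover, in (i) and (ii) one can take the same a; if (i) holds with a then (iii) holds with the same a; and if (iii) holds with a then (i) holds with 2a. -/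

import Mathlib

open Real Filter Set

noncomputable section

/-- The class `LC` of normalized log-convex sequences with `(M_p)^{1/p} → ∞`. -/
def IsLC (M : ℕ → ℝ) : Prop :=
  (∀ p, 0 < M p) ∧ M 0 = 1 ∧ 1 ≤ M 1 ∧
  (∀ p : ℕ, 1 ≤ p → (M p) ^ 2 ≤ M (p - 1) * M (p + 1)) ∧
  Filter.Tendsto (fun p : ℕ => (M p) ^ ((p : ℝ)⁻¹)) Filter.atTop Filter.atTop

/-- The sequence of quotients `μ_0 = 1`, `μ_p = M_p / M_{p-1}`. -/
def seqQuot (M : ℕ → ℝ) (p : ℕ) : ℝ :=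
  if p = 0 then 1 else M p / M (p - 1)

/-- The associated weight function `ω_M(t) = sup_p log(t^p / M_p)`. -/
def omegaM (M : ℕ → ℝ) (t : ℝ) : ℝ :=
  ⨆ p : ℕ, Real.log (t ^ p / M p)

/-- The auxiliary sequence `M̃^a_p = (M_{ap})^{1/a}`. -/
def tildeSeq (M : ℕ → ℝ) (a : ℕ) (p : ℕ) : ℝ :=
  (M (a * p)) ^ ((a : ℝ)⁻¹)

/-- Condition (genmg) for the parameter `d`. -/
def genMG (M : ℕ → ℝ) (d : ℕ) : Prop :=
  ∃ A : ℝ, 1 ≤ A ∧ ∀ p : ℕ, 1 ≤ p →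
    seqQuot M p ≤ A * (M (d * p)) ^ (((d : ℝ) * (p : ℝ))⁻¹)

/-- The moderate growth index `g(M) ∈ ℕ ∪ {+∞}`. -/
def gIndex (M : ℕ → ℝ) : ℕ∞ :=
  sInf {e : ℕ∞ | ∃ n : ℕ, 0 < n ∧ genMG M n ∧ e = (n : ℕ∞)}

/-- The relation `M ≼ N`, i.e. `sup_{p ≥ 1} (M_p/N_p)^{1/p} < ∞`. -/
def Preceq (M N : ℕ → ℝ) : Prop :=
  ∃ C : ℝ, ∀ p : ℕ, 1 ≤ p → (M p / N p) ^ ((p : ℝ)⁻¹) ≤ C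

/-- The class `W₀` of normalized weight functions. -/
def IsW0 (ω : ℝ → ℝ) : Prop :=
  ContinuousOn ω (Set.Ici 0) ∧
  MonotoneOn ω (Set.Ici 0) ∧
  (∀ t ∈ Set.Icc (0 : ℝ) 1, ω t = 0) ∧
  Filter.Tendsto ω Filter.atTop Filter.atTop ∧
  (fun t => Real.log t) =o[Filter.atTop] ω ∧
  ConvexOn ℝ Set.univ (fun t => ω (Real.exp t))

/-- The Legendre–Fenchel–Young conjugate `φ*_ω(x) = sup{xy − ω(e^y) : y ≥ 0}`. -/
def phiStar (ω : ℝ → ℝ) (x : ℝ) : ℝ :=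
  sSup {z : ℝ | ∃ y : ℝ, 0 ≤ y ∧ z = x * y - ω (Real.exp y)}

/-- The associated weight matrix `W^(ℓ)_p = exp(φ*_ω(ℓp)/ℓ)`. -/
def Wmat (ω : ℝ → ℝ) (l : ℝ) (p : ℕ) : ℝ :=
  Real.exp (phiStar ω (l * p) / l)

/-- Condition `(ω₆)`. -/
def Omega6 (ω : ℝ → ℝ) : Prop :=
  ∃ H : ℝ, 1 ≤ H ∧ ∀ t : ℝ, 0 ≤ t → 2 * ω t ≤ ω (H * t) + H

/-- The counting function `Σ_M(t) = #{p ≥ 1 : μ_p ≤ t}`. -/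
def SigmaM (M : ℕ → ℝ) (t : ℝ) : ℕ :=
  Set.ncard {p : ℕ | 1 ≤ p ∧ seqQuot M p ≤ t}

end

/-- Condition (i) of Corollary `omegaMcharacterzing` for the parameter `a`. -/
def S12P1 (M L : ℕ → ℝ) (a : ℕ) : Prop :=
  ∃ B : ℝ, 1 ≤ B ∧ ∀ p : ℕ, L (2 * p) ≤ B ^ p * L p * (M (a * p)) ^ ((a : ℝ)⁻¹)

/-- Condition (ii) of Corollary `omegaMcharacterzing` for the parameter `a`. -/
def S12P2 (M L : ℕ → ℝ) (a : ℕ) : Prop :=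
  ∃ A : ℝ, 1 ≤ A ∧ ∃ C : ℝ, 0 ≤ C ∧ ∀ t : ℝ, 0 ≤ t →
    omegaM (fun p => L p * tildeSeq M a p) (t ^ 2) ≤ omegaM L (A * t) + C

/-- Condition (iii) of Corollary `omegaMcharacterzing` for the parameter `a`. -/
def S12P3 (M L : ℕ → ℝ) (a : ℕ) : Prop :=
  ∃ A : ℝ, 1 ≤ A ∧ ∀ p : ℕ, 1 ≤ p →
    seqQuot L p ≤ A * (M (a * p)) ^ (((a : ℝ) * (p : ℝ))⁻¹)

section helpers

lemma seqQuot_zero' (L : ℕ → ℝ) : seqQuot L 0 = 1 := by simp [seqQuot]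

lemma seqQuot_succ' (L : ℕ → ℝ) (hpos : ∀ p, 0 < L p) (p : ℕ) :
    L (p + 1) = seqQuot L (p + 1) * L p := by
  simp only [seqQuot, Nat.add_sub_cancel, if_neg (Nat.succ_ne_zero p)]
  exact (div_mul_cancel₀ _ (hpos p).ne').symm

lemma seqQuot_pos' (L : ℕ → ℝ) (hpos : ∀ p, 0 < L p) (p : ℕ) : 0 < seqQuot L p := by
  cases p with
  | zero => norm_num [seqQuot]
  | succ k =>
    simp only [seqQuot, if_neg (Nat.succ_ne_zero k), Nat.add_sub_cancel]
    exact div_pos (hpos _) (hpos _)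

/-- generic monotonicity of quotients from log-convexity -/
lemma quot_mono' (L : ℕ → ℝ) (hpos : ∀ p, 0 < L p) (h1 : 1 ≤ L 1) (h0 : L 0 = 1)
    (hconv : ∀ k : ℕ, L (k + 1) * L (k + 1) ≤ L k * L (k + 2)) :
    Monotone (seqQuot L) := by
  apply monotone_nat_of_le_succ
  intro p
  cases p with
  | zero =>
    simp only [seqQuot, if_pos rfl, if_neg (Nat.succ_ne_zero 0), Nat.add_sub_cancel, h0, div_one]
    exact h1
  | succ k =>
    simp only [seqQuot, if_neg (Nat.succ_ne_zero _), Nat.add_sub_cancel]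
    rw [div_le_div_iff₀ (hpos k) (hpos (k + 1))]
    have := hconv k
    nlinarith [this]

lemma one_le_quot' (L : ℕ → ℝ) (hq : Monotone (seqQuot L)) (p : ℕ) : 1 ≤ seqQuot L p := by
  have := hq (Nat.zero_le p)
  rwa [seqQuot_zero'] at this

lemma one_le_seq' (L : ℕ → ℝ) (hpos : ∀ p, 0 < L p) (h0 : L 0 = 1)
    (hq : Monotone (seqQuot L)) (p : ℕ) : 1 ≤ L p := by
  induction p with
  | zero => simp [h0]
  | succ k ih =>
    rw [seqQuot_succ' L hpos k]
    nlinarith [one_le_quot' L hq (k + 1)]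

/-- lemma C : λ_q^j * L_q ≤ L_{q+j} -/
lemma lemC (L : ℕ → ℝ) (hpos : ∀ p, 0 < L p) (hq : Monotone (seqQuot L)) (q : ℕ) :
    ∀ j : ℕ, seqQuot L q ^ j * L q ≤ L (q + j) := by
  intro j
  induction j with
  | zero => simp
  | succ j ih =>
    have hqle : seqQuot L q ≤ seqQuot L (q + j + 1) := hq (by omega)
    have hqpos : 0 < seqQuot L q := seqQuot_pos' L hpos q
    calc seqQuot L q ^ (j + 1) * L q = seqQuot L q * (seqQuot L q ^ j * L q) := by ring
      _ ≤ seqQuot L q * L (q + j) := by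
          exact mul_le_mul_of_nonneg_left ih hqpos.le
      _ ≤ seqQuot L (q + j + 1) * L (q + j) := by
          exact mul_le_mul_of_nonneg_right hqle (hpos _).le
      _ = L (q + j + 1) := (seqQuot_succ' L hpos (q + j)).symm

/-- lemma B : L_q ≤ λ_q^j * L_{q-j} for j ≤ q -/
lemma lemB (L : ℕ → ℝ) (hpos : ∀ p, 0 < L p) (hq : Monotone (seqQuot L)) (q : ℕ) :
    ∀ j : ℕ, j ≤ q → L q ≤ seqQuot L q ^ j * L (q - j) := by
  intro j
  induction j with
  | zero => simp
  | succ j ih =>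
    intro hj
    have ih' := ih (by omega)
    have hk : q - j = (q - (j + 1)) + 1 := by omega
    have hqle : seqQuot L (q - j) ≤ seqQuot L q := hq (by omega)
    have hqpos : 0 < seqQuot L q := seqQuot_pos' L hpos q
    calc L q ≤ seqQuot L q ^ j * L (q - j) := ih'
      _ = seqQuot L q ^ j * (seqQuot L (q - j) * L (q - (j + 1))) := by
          rw [hk, seqQuot_succ' L hpos (q - (j + 1))]
      _ ≤ seqQuot L q ^ j * (seqQuot L q * L (q - (j + 1))) := by
          apply mul_le_mul_of_nonneg_left _ (pow_nonneg hqpos.le j)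
          exact mul_le_mul_of_nonneg_right hqle (hpos _).le
      _ = seqQuot L q ^ (j + 1) * L (q - (j + 1)) := by ring

/-- Claim A : ω_L(λ_q) ≤ log(λ_q^q / L_q) -/
lemma claimA (L : ℕ → ℝ) (hpos : ∀ p, 0 < L p) (hq : Monotone (seqQuot L)) (q : ℕ) :
    omegaM L (seqQuot L q) ≤ Real.log (seqQuot L q ^ q / L q) := by
  apply ciSup_le
  intro r
  have hqpos : 0 < seqQuot L q := seqQuot_pos' L hpos q
  apply Real.log_le_log (div_pos (pow_pos hqpos r) (hpos r))
  rw [div_le_div_iff₀ (hpos r) (hpos q)]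
  rcases le_total r q with h | h
  · have := lemB L hpos hq q (q - r) (by omega)
    have hrr : q - (q - r) = r := by omega
    rw [hrr] at this
    calc seqQuot L q ^ r * L q ≤ seqQuot L q ^ r * (seqQuot L q ^ (q - r) * L r) :=
        mul_le_mul_of_nonneg_left this (pow_nonneg hqpos.le r)
      _ = seqQuot L q ^ q * L r := by rw [← mul_assoc, ← pow_add]; congr 2; omega
  · have := lemC L hpos hq q (r - q)
    have hrr : q + (r - q) = r := by omega
    rw [hrr] at this
    have e : seqQuot L q ^ r * L q = seqQuot L q ^ q * (seqQuot L q ^ (r - q) * L q) := by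
      rw [← mul_assoc, ← pow_add]; congr 2; omega
    calc seqQuot L q ^ r * L q = seqQuot L q ^ q * (seqQuot L q ^ (r - q) * L q) := e
      _ ≤ seqQuot L q ^ q * L r := mul_le_mul_of_nonneg_left this (pow_nonneg hqpos.le q)

/-- boundedness of the family defining ω_L -/
lemma omega_bdd (L : ℕ → ℝ) (hL : IsLC L) {u : ℝ} (hu : 0 ≤ u) :
    BddAbove (Set.range fun p : ℕ => Real.log (u ^ p / L p)) := by
  obtain ⟨hpos, -, -, -, htend⟩ := hL
  obtain ⟨R, hR⟩ := Filter.eventually_atTop.mp (htend.eventually_ge_atTop (max u 1))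
  have key : ∀ p : ℕ, max R 1 ≤ p → Real.log (u ^ p / L p) ≤ 0 := by
    intro p hp
    have hp1 : p ≠ 0 := by omega
    have hv : max u 1 ≤ L p ^ ((p : ℝ)⁻¹) := hR p (le_trans (le_max_left _ _) hp)
    have hvL : (max u 1) ^ p ≤ L p := by
      calc (max u 1) ^ p ≤ (L p ^ ((p : ℝ)⁻¹)) ^ p :=
          pow_le_pow_left₀ (le_trans zero_le_one (le_max_right u 1)) hv p
        _ = L p := Real.rpow_inv_natCast_pow (hpos p).le hp1
    apply Real.log_nonpos (div_nonneg (pow_nonneg hu p) (hpos p).le)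
    rw [div_le_one (hpos p)]
    exact le_trans (pow_le_pow_left₀ hu (le_max_left u 1) p) hvL
  have hsub : (Set.range fun p : ℕ => Real.log (u ^ p / L p)) ⊆
      ((fun p : ℕ => Real.log (u ^ p / L p)) '' (Set.Iio (max R 1))) ∪ Set.Iic 0 := by
    rintro x ⟨r, rfl⟩
    rcases lt_or_ge r (max R 1) with h | h
    · exact Or.inl ⟨r, h, rfl⟩
    · exact Or.inr (key r h)
  exact (((Set.finite_Iio _).image _).bddAbove.union bddAbove_Iic).mono hsub

lemma omega_nonneg (L : ℕ → ℝ) (hL : IsLC L) {u : ℝ} (hu : 0 ≤ u) : 0 ≤ omegaM L u := by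
  have h0 := hL.2.1
  have := le_ciSup (omega_bdd L hL hu) 0
  simp [h0] at this
  exact this

/-- product shift inequality for log-convex sequences -/
lemma lc_shift (M : ℕ → ℝ) (hpos : ∀ p, 0 < M p) (hq : Monotone (seqQuot M)) (d : ℕ) :
    ∀ (k q : ℕ), M (q + k) * M (q + d) ≤ M q * M (q + d + k) := by
  intro k
  induction k with
  | zero => intro q; simp [mul_comm]
  | succ k ih =>
    intro q
    have h1 : M (q + k + 1) = seqQuot M (q + k + 1) * M (q + k) := seqQuot_succ' M hpos (q + k)
    have h2 : M (q + d + k + 1) = seqQuot M (q + d + k + 1) * M (q + d + k) :=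
      seqQuot_succ' M hpos (q + d + k)
    have hle : seqQuot M (q + k + 1) ≤ seqQuot M (q + d + k + 1) := hq (by omega)
    have hp1 : 0 < seqQuot M (q + k + 1) := seqQuot_pos' M hpos _
    have key : M (q + k + 1) * M (q + d) ≤ M q * M (q + d + k + 1) := by
      have e : M (q + k + 1) * M (q + d)
          = seqQuot M (q + k + 1) * (M (q + k) * M (q + d)) := by rw [h1]; ring
      calc M (q + k + 1) * M (q + d)
          = seqQuot M (q + k + 1) * (M (q + k) * M (q + d)) := e
        _ ≤ seqQuot M (q + k + 1) * (M q * M (q + d + k)) :=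
          mul_le_mul_of_nonneg_left (ih q) hp1.le
        _ ≤ seqQuot M (q + d + k + 1) * (M q * M (q + d + k)) := by
          apply mul_le_mul_of_nonneg_right hle
          have := hpos q; have := hpos (q + d + k); positivity
        _ = M q * M (q + d + k + 1) := by rw [h2]; ring
    exact key

end helpers

section mainlemmas

/-- facts about N = L * tilde M -/
lemma tilde_pos (M : ℕ → ℝ) (hM : IsLC M) (a p : ℕ) : 0 < tildeSeq M a p :=
  Real.rpow_pos_of_pos (hM.1 _) _

lemma one_le_tilde (M : ℕ → ℝ) (hM : IsLC M) (a p : ℕ) : 1 ≤ tildeSeq M a p := by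
  have hMq : Monotone (seqQuot M) := by
    apply quot_mono' M hM.1 hM.2.2.1 hM.2.1
    intro k
    have := hM.2.2.2.1 (k + 1) (by omega)
    simp only [Nat.add_sub_cancel] at this
    nlinarith [this]
  have h1 : 1 ≤ M (a * p) := one_le_seq' M hM.1 hM.2.1 hMq (a * p)
  calc (1 : ℝ) = 1 ^ ((a : ℝ)⁻¹) := (Real.one_rpow _).symm
    _ ≤ (M (a * p)) ^ ((a : ℝ)⁻¹) := Real.rpow_le_rpow zero_le_one h1 (by positivity)

lemma lc_quot_mono (L : ℕ → ℝ) (hL : IsLC L) : Monotone (seqQuot L) := by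
  apply quot_mono' L hL.1 hL.2.2.1 hL.2.1
  intro k
  have := hL.2.2.2.1 (k + 1) (by omega)
  simp only [Nat.add_sub_cancel] at this
  nlinarith [this]

lemma N_pos (M L : ℕ → ℝ) (hM : IsLC M) (hL : IsLC L) (a p : ℕ) :
    0 < L p * tildeSeq M a p := mul_pos (hL.1 p) (tilde_pos M hM a p)

lemma N_quot_mono (M L : ℕ → ℝ) (hM : IsLC M) (hL : IsLC L) (a : ℕ) :
    Monotone (seqQuot (fun p => L p * tildeSeq M a p)) := by
  have hMq : Monotone (seqQuot M) := lc_quot_mono M hM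
  apply quot_mono' _ (N_pos M L hM hL a)
  · show (1:ℝ) ≤ L 1 * tildeSeq M a 1
    calc (1:ℝ) = 1 * 1 := (one_mul 1).symm
      _ ≤ L 1 * tildeSeq M a 1 := mul_le_mul hL.2.2.1 (one_le_tilde M hM a 1) zero_le_one
          (le_trans zero_le_one hL.2.2.1)
  · show L 0 * tildeSeq M a 0 = 1
    rw [hL.2.1, show tildeSeq M a 0 = 1 by simp [tildeSeq, hM.2.1], mul_one]
  · intro k
    show L (k + 1) * tildeSeq M a (k + 1) * (L (k + 1) * tildeSeq M a (k + 1)) ≤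
      L k * tildeSeq M a k * (L (k + 2) * tildeSeq M a (k + 2))
    have hLc : L (k + 1) * L (k + 1) ≤ L k * L (k + 2) := by
      have := hL.2.2.2.1 (k + 1) (by omega)
      simp only [Nat.add_sub_cancel] at this
      nlinarith [this]
    have hTc : tildeSeq M a (k + 1) * tildeSeq M a (k + 1) ≤
        tildeSeq M a k * tildeSeq M a (k + 2) := by
      have hsh := lc_shift M hM.1 hMq a a (a * k)
      have e1 : a * k + a = a * (k + 1) := by ring
      have e2 : a * k + a + a = a * (k + 2) := by ring
      rw [e2, e1] at hsh
      unfold tildeSeq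
      rw [← Real.mul_rpow (hM.1 _).le (hM.1 _).le, ← Real.mul_rpow (hM.1 _).le (hM.1 _).le]
      exact Real.rpow_le_rpow (mul_nonneg (hM.1 _).le (hM.1 _).le) hsh (by positivity)
    calc L (k + 1) * tildeSeq M a (k + 1) * (L (k + 1) * tildeSeq M a (k + 1))
        = (L (k + 1) * L (k + 1)) * (tildeSeq M a (k + 1) * tildeSeq M a (k + 1)) := by ring
      _ ≤ (L k * L (k + 2)) * (tildeSeq M a k * tildeSeq M a (k + 2)) := by
          apply mul_le_mul hLc hTc
            (mul_pos (tilde_pos M hM a _) (tilde_pos M hM a _)).le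
          exact (mul_pos (hL.1 k) (hL.1 (k + 2))).le
      _ = L k * tildeSeq M a k * (L (k + 2) * tildeSeq M a (k + 2)) := by ring

lemma L_le_N (M L : ℕ → ℝ) (hM : IsLC M) (hL : IsLC L) (a p : ℕ) :
    L p ≤ L p * tildeSeq M a p :=
  le_mul_of_one_le_right (hL.1 p).le (one_le_tilde M hM a p)

lemma N_omega_bdd (M L : ℕ → ℝ) (hM : IsLC M) (hL : IsLC L) (a : ℕ) {u : ℝ} (hu : 0 < u) :
    BddAbove (Set.range fun p : ℕ => Real.log (u ^ p / (L p * tildeSeq M a p))) := by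
  obtain ⟨c, hc⟩ := omega_bdd L hL hu.le
  refine ⟨c, ?_⟩
  rintro x ⟨r, rfl⟩
  have h1 : Real.log (u ^ r / (L r * tildeSeq M a r)) ≤ Real.log (u ^ r / L r) := by
    apply Real.log_le_log (div_pos (pow_pos hu r) (N_pos M L hM hL a r))
    apply div_le_div_of_nonneg_left (by positivity) (hL.1 r) (L_le_N M L hM hL a r)
  exact le_trans h1 (hc ⟨r, rfl⟩)

/-- P1 → P3 with the same a -/
lemma p1_to_p3 (M L : ℕ → ℝ) (hM : IsLC M) (hL : IsLC L) (a : ℕ) (ha : 0 < a)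
    (h : S12P1 M L a) : S12P3 M L a := by
  obtain ⟨B, hB1, hB⟩ := h
  refine ⟨B, hB1, ?_⟩
  intro p hp
  have hLq := lc_quot_mono L hL
  have key := lemC L hL.1 hLq p p
  have hB2 := hB p
  rw [two_mul] at hB2
  have hZpos : (0:ℝ) < (M (a * p)) ^ ((a : ℝ)⁻¹) := Real.rpow_pos_of_pos (hM.1 _) _
  have hqpos : 0 < seqQuot L p := seqQuot_pos' L hL.1 p
  have h1 : seqQuot L p ^ p * L p ≤ B ^ p * (M (a * p)) ^ ((a : ℝ)⁻¹) * L p := by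
    calc seqQuot L p ^ p * L p ≤ L (p + p) := key
      _ ≤ B ^ p * L p * (M (a * p)) ^ ((a : ℝ)⁻¹) := hB2
      _ = B ^ p * (M (a * p)) ^ ((a : ℝ)⁻¹) * L p := by ring
  have h2 : seqQuot L p ^ p ≤ B ^ p * (M (a * p)) ^ ((a : ℝ)⁻¹) :=
    le_of_mul_le_mul_right h1 (hL.1 p)
  have hp0 : p ≠ 0 := by omega
  have h3 := Real.rpow_le_rpow (pow_nonneg hqpos.le p) h2
    (by positivity : (0:ℝ) ≤ ((p:ℝ))⁻¹)
  rwa [Real.pow_rpow_inv_natCast hqpos.le hp0,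
    Real.mul_rpow (by positivity) (Real.rpow_pos_of_pos (hM.1 _) _).le,
    Real.pow_rpow_inv_natCast (by linarith : (0:ℝ) ≤ B) hp0,
    ← Real.rpow_mul (hM.1 _).le, ← mul_inv] at h3

/-- P3 with a → P1 with 2a -/
lemma p3_to_p1 (M L : ℕ → ℝ) (hM : IsLC M) (hL : IsLC L) (a : ℕ) (ha : 0 < a)
    (h : S12P3 M L a) : S12P1 M L (2 * a) := by
  obtain ⟨A, hA1, hA⟩ := h
  refine ⟨A, hA1, ?_⟩
  intro p
  rcases Nat.eq_zero_or_pos p with rfl | hp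
  · simp [hL.2.1, hM.2.1, Real.one_rpow]
  have hLq := lc_quot_mono L hL
  have key := lemB L hL.1 hLq (2 * p) p (by omega)
  have hpp : 2 * p - p = p := by omega
  rw [hpp] at key
  have hq2p := hA (2 * p) (by omega)
  have hqpos : 0 < seqQuot L (2 * p) := seqQuot_pos' L hL.1 _
  have hMpos := hM.1 (a * (2 * p))
  have hpow : seqQuot L (2 * p) ^ p ≤
      (A * (M (a * (2 * p))) ^ (((a : ℝ) * ((2 * p : ℕ) : ℝ))⁻¹)) ^ p :=
    pow_le_pow_left₀ hqpos.le hq2p p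
  have hW : ((M (a * (2 * p))) ^ (((a : ℝ) * ((2 * p : ℕ) : ℝ))⁻¹)) ^ p
      = (M (2 * a * p)) ^ (((2 * a : ℕ) : ℝ))⁻¹ := by
    have e1 : a * (2 * p) = 2 * a * p := by ring
    rw [e1, ← Real.rpow_natCast ((M (2*a*p)) ^ _) p, ← Real.rpow_mul (hM.1 _).le]
    congr 1
    have hp0 : (p : ℝ) ≠ 0 := Nat.cast_ne_zero.mpr (by omega)
    have ha0 : (a : ℝ) ≠ 0 := Nat.cast_ne_zero.mpr (by omega)
    push_cast
    field_simp
  calc L (2 * p) ≤ seqQuot L (2 * p) ^ p * L p := key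
    _ ≤ (A * (M (a * (2 * p))) ^ (((a : ℝ) * ((2 * p : ℕ) : ℝ))⁻¹)) ^ p * L p :=
        mul_le_mul_of_nonneg_right hpow (hL.1 p).le
    _ = A ^ p * L p * (M (2 * a * p)) ^ (((2 * a : ℕ) : ℝ))⁻¹ := by
        rw [mul_pow, hW]; ring

/-- P1 → P2 with the same a -/
lemma p1_to_p2 (M L : ℕ → ℝ) (hM : IsLC M) (hL : IsLC L) (a : ℕ) (ha : 0 < a)
    (h : S12P1 M L a) : S12P2 M L a := by
  obtain ⟨B, hB1, hB⟩ := h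
  have hB0 : (0:ℝ) ≤ B := by linarith
  refine ⟨Real.sqrt B, ?_, 0, le_refl 0, ?_⟩
  · rw [show (1:ℝ) = Real.sqrt 1 by simp]
    exact Real.sqrt_le_sqrt hB1
  intro t ht
  rw [add_zero]
  rcases eq_or_lt_of_le ht with rfl | ht0
  · -- t = 0
    have h1 : omegaM (fun p => L p * tildeSeq M a p) ((0:ℝ) ^ 2) ≤ 0 := by
      apply ciSup_le
      intro p
      cases p with
      | zero => simp [hL.2.1, tildeSeq, hM.2.1]
      | succ k =>
        rw [show ((0:ℝ) ^ 2) = 0 by norm_num, zero_pow (Nat.succ_ne_zero k), zero_div,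
          Real.log_zero]
    refine le_trans h1 (omega_nonneg L hL (by positivity))
  · -- t > 0
    have hA2 : Real.sqrt B ^ 2 = B := Real.sq_sqrt hB0
    have hAt : 0 < Real.sqrt B * t :=
      mul_pos (Real.sqrt_pos.mpr (lt_of_lt_of_le one_pos hB1)) ht0
    apply ciSup_le
    intro p
    have hNp := N_pos M L hM hL a p
    have harg : (t ^ 2) ^ p / (L p * tildeSeq M a p) ≤
        (Real.sqrt B * t) ^ (2 * p) / L (2 * p) := by
      rw [div_le_div_iff₀ hNp (hL.1 _)]
      calc (t ^ 2) ^ p * L (2 * p)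
          ≤ (t ^ 2) ^ p * (B ^ p * L p * (M (a * p)) ^ ((a : ℝ)⁻¹)) :=
            mul_le_mul_of_nonneg_left (hB p) (by positivity)
        _ = (Real.sqrt B * t) ^ (2 * p) * (L p * tildeSeq M a p) := by
            rw [pow_mul, mul_pow, hA2, tildeSeq]; ring
    calc Real.log ((t ^ 2) ^ p / (L p * tildeSeq M a p))
        ≤ Real.log ((Real.sqrt B * t) ^ (2 * p) / L (2 * p)) :=
          Real.log_le_log (div_pos (pow_pos (pow_pos ht0 2) p) hNp) harg
      _ ≤ omegaM L (Real.sqrt B * t) := le_ciSup (omega_bdd L hL hAt.le) (2 * p)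

/-- P2 → P1 with the same a -/
lemma p2_to_p1 (M L : ℕ → ℝ) (hM : IsLC M) (hL : IsLC L) (a : ℕ) (ha : 0 < a)
    (h : S12P2 M L a) : S12P1 M L a := by
  obtain ⟨A, hA1, C, hC0, hW⟩ := h
  have hA0 : (0:ℝ) < A := by linarith
  have heC : (1:ℝ) ≤ Real.exp C := Real.one_le_exp hC0
  refine ⟨A ^ 2 * Real.exp C, by nlinarith, ?_⟩
  intro p
  rcases Nat.eq_zero_or_pos p with rfl | hp
  · simp [hL.2.1, hM.2.1, Real.one_rpow]
  have hLq := lc_quot_mono L hL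
  set t₀ := seqQuot L (2 * p) with ht₀def
  have ht₀ : 0 < t₀ := seqQuot_pos' L hL.1 _
  set s := t₀ / A with hsdef
  have hs : 0 < s := div_pos ht₀ hA0
  have hAs : A * s = t₀ := by rw [hsdef]; field_simp
  have h1 : omegaM L t₀ ≤ Real.log (t₀ ^ (2 * p) / L (2 * p)) := claimA L hL.1 hLq (2 * p)
  have h2 : omegaM (fun q => L q * tildeSeq M a q) (s ^ 2) ≤ omegaM L t₀ + C := by
    have := hW s hs.le
    rwa [hAs] at this
  have h3 : Real.log ((s ^ 2) ^ p / (L p * tildeSeq M a p)) ≤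
      omegaM (fun q => L q * tildeSeq M a q) (s ^ 2) :=
    le_ciSup (N_omega_bdd M L hM hL a (pow_pos hs 2)) p
  have hNp := N_pos M L hM hL a p
  have h4 : Real.log ((s ^ 2) ^ p / (L p * tildeSeq M a p)) ≤
      Real.log (t₀ ^ (2 * p) / L (2 * p) * Real.exp C) := by
    rw [Real.log_mul (div_pos (pow_pos ht₀ _) (hL.1 _)).ne' (Real.exp_ne_zero C),
      Real.log_exp]
    linarith
  have h5 : (s ^ 2) ^ p / (L p * tildeSeq M a p) ≤ t₀ ^ (2 * p) / L (2 * p) * Real.exp C := by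
    have hx : (0:ℝ) < (s ^ 2) ^ p / (L p * tildeSeq M a p) :=
      div_pos (pow_pos (pow_pos hs 2) p) hNp
    calc (s ^ 2) ^ p / (L p * tildeSeq M a p)
        = Real.exp (Real.log ((s ^ 2) ^ p / (L p * tildeSeq M a p))) := (Real.exp_log hx).symm
      _ ≤ Real.exp (Real.log (t₀ ^ (2 * p) / L (2 * p) * Real.exp C)) := Real.exp_le_exp.mpr h4
      _ = t₀ ^ (2 * p) / L (2 * p) * Real.exp C := Real.exp_log
          (mul_pos (div_pos (pow_pos ht₀ _) (hL.1 _)) (Real.exp_pos C))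
  -- cross multiply
  rw [div_le_iff₀ hNp, div_mul_eq_mul_div, div_mul_eq_mul_div, le_div_iff₀ (hL.1 _)] at h5
  -- h5 : (s^2)^p * L (2p) ≤ t₀^(2p) * exp C * (L p * tilde)
  have ht0s : t₀ ^ (2 * p) = A ^ (2 * p) * (s ^ 2) ^ p := by
    rw [← hAs]; ring
  rw [ht0s] at h5
  have hs2p : (0:ℝ) < (s ^ 2) ^ p := pow_pos (pow_pos hs 2) p
  have h6 : L (2 * p) ≤ A ^ (2 * p) * Real.exp C * (L p * tildeSeq M a p) := by
    apply le_of_mul_le_mul_left _ hs2p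
    calc (s ^ 2) ^ p * L (2 * p)
        ≤ A ^ (2 * p) * (s ^ 2) ^ p * Real.exp C * (L p * tildeSeq M a p) := h5
      _ = (s ^ 2) ^ p * (A ^ (2 * p) * Real.exp C * (L p * tildeSeq M a p)) := by ring
  have h7 : A ^ (2 * p) * Real.exp C ≤ (A ^ 2 * Real.exp C) ^ p := by
    rw [mul_pow, ← pow_mul]
    exact mul_le_mul_of_nonneg_left (le_self_pow₀ heC (by omega)) (by positivity)
  calc L (2 * p) ≤ A ^ (2 * p) * Real.exp C * (L p * tildeSeq M a p) := h6
    _ ≤ (A ^ 2 * Real.exp C) ^ p * (L p * tildeSeq M a p) :=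
        mul_le_mul_of_nonneg_right h7 hNp.le
    _ = (A ^ 2 * Real.exp C) ^ p * L p * tildeSeq M a p := by ring

end mainlemmas

theorem stmt12 (M L : ℕ → ℝ) (hM : IsLC M) (hL : IsLC L) :
    (((∃ a : ℕ, 0 < a ∧ S12P1 M L a) ↔ (∃ a : ℕ, 0 < a ∧ S12P2 M L a)) ∧
     ((∃ a : ℕ, 0 < a ∧ S12P1 M L a) ↔ (∃ a : ℕ, 0 < a ∧ S12P3 M L a))) ∧
    (∀ a : ℕ, 0 < a → (S12P1 M L a ↔ S12P2 M L a)) ∧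
    (∀ a : ℕ, 0 < a → S12P1 M L a → S12P3 M L a) ∧
    (∀ a : ℕ, 0 < a → S12P3 M L a → S12P1 M L (2 * a)) := by
  have e12 : ∀ a : ℕ, 0 < a → (S12P1 M L a ↔ S12P2 M L a) := fun a ha =>
    ⟨p1_to_p2 M L hM hL a ha, p2_to_p1 M L hM hL a ha⟩
  refine ⟨⟨?_, ?_⟩, e12, fun a ha h => p1_to_p3 M L hM hL a ha h,
    fun a ha h => p3_to_p1 M L hM hL a ha h⟩
  · exact ⟨fun ⟨a, ha, h⟩ => ⟨a, ha, (e12 a ha).mp h⟩,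
      fun ⟨a, ha, h⟩ => ⟨a, ha, (e12 a ha).mpr h⟩⟩
  · exact ⟨fun ⟨a, ha, h⟩ => ⟨a, ha, p1_to_p3 M L hM hL a ha h⟩,
      fun ⟨a, ha, h⟩ => ⟨2 * a, by omega, p3_to_p1 M L hM hL a ha h⟩⟩
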